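/- Let n ≥ 1 be an integer, 1 ≤ p < ∞ and 0 ≤ β < n. If f belongs to the vanishing-at-infinity subspace L^{p,β}_∞(ℝⁿ) and g ∈ L¹(ℝⁿ), then the convolution f ∗ g is defined almost everywhere and belongs to L^{p,β}_∞(ℝⁿ); i.e. L^{p,β}_∞ is invariant under convolution with integrable functions. -/

import Mathlib

open MeasureTheory Metric ENNReal Filter

noncomputable def morreyA (n : ℕ) (p β : ℝ)
    (f : EuclideanSpace ℝ (Fin n) → ℂ)
    (y : EuclideanSpace ℝ (Fin n)) (r : ℝ) : ℝ≥0∞ :=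
  ENNReal.ofReal (r ^ (-β)) * ∫⁻ x in ball y r, (‖f x‖₊ : ℝ≥0∞) ^ p

/-- The (global) Morrey norm `‖f‖_{L^{p,β}}`. -/
noncomputable def morreyNorm (n : ℕ) (p β : ℝ)
    (f : EuclideanSpace ℝ (Fin n) → ℂ) : ℝ≥0∞ :=
  ⨆ (y : EuclideanSpace ℝ (Fin n)) (r : ℝ) (_ : 0 < r),
    (morreyA n p β f y r) ^ (1 / p)

/-- Membership in the vanishing-at-origin subspace `L^{p,β}_0`. -/
def vanishAtOrigin (n : ℕ) (p β : ℝ) (f : EuclideanSpace ℝ (Fin n) → ℂ) : Prop :=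
  Tendsto
    (fun t : ℝ => ⨆ (y : EuclideanSpace ℝ (Fin n)) (r : ℝ) (_ : 0 < r) (_ : r ≤ t),
      morreyA n p β f y r)
    (nhdsWithin 0 (Set.Ioi 0)) (nhds 0)

/-- Membership in the vanishing-at-infinity subspace `L^{p,β}_∞`. -/
def vanishAtInfinity (n : ℕ) (p β : ℝ) (f : EuclideanSpace ℝ (Fin n) → ℂ) : Prop :=
  Tendsto
    (fun t : ℝ => ⨆ (y : EuclideanSpace ℝ (Fin n)) (r : ℝ) (_ : t ≤ r),
      morreyA n p β f y r)
    atTop (nhds 0)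

/-- Membership in the truncation subspace `L^{p,β}_*`. -/
def vanishTrunc (n : ℕ) (p β : ℝ) (f : EuclideanSpace ℝ (Fin n) → ℂ) : Prop :=
  Tendsto
    (fun N : ℝ => ⨆ (y : EuclideanSpace ℝ (Fin n)) (r : ℝ) (_ : 0 < r),
      ENNReal.ofReal (r ^ (-β)) *
        ∫⁻ x in ball y r ∩ {x : EuclideanSpace ℝ (Fin n) | N < ‖x‖},
          (‖f x‖₊ : ℝ≥0∞) ^ p)
    atTop (nhds 0)

/-! Pointwise `|f ∗ g| ≤ |g| ∗ |f|`, and Hölder's inequality with the weight `|g|` gives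
`(|g| ∗ |f|)^p ≤ ‖g‖₁^(p-1) (|g| ∗ |f|^p)`. Integrating over a ball `B(y, r)` and swapping the
integrals (Tonelli), `∫_{B(y,r)} |f ∗ g|^p ≤ ‖g‖₁^p sup_z ∫_{B(z,r)} |f|^p`, so each Morrey
quantity of `f ∗ g` at radius `r` is at most `‖g‖₁^p` times the supremum of those of `f` at the same
radius. This bounds the Morrey norm and transfers the vanishing at infinity; the same local bound
makes `|g| ∗ |f|` locally `p`-integrable, hence finite a.e., which is the a.e. integrability. -/

theorem ENNReal.rpow_lintegral_mul_le {α : Type*} [MeasurableSpace α] {μ : Measure α} {p : ℝ}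
    (hp : 1 ≤ p) {F w : α → ℝ≥0∞} (hF : AEMeasurable F μ) (hw : AEMeasurable w μ) :
    (∫⁻ z, F z * w z ∂μ) ^ p ≤ (∫⁻ z, w z ∂μ) ^ (p - 1) * ∫⁻ z, F z ^ p * w z ∂μ := by
  rcases hp.eq_or_lt with rfl | hp1
  · simp
  set q := p.conjExponent
  have hpq : p.HolderConjugate q := .conjExponent hp1
  have hsplit (z : α) : F z * w z ^ (1 / p) * w z ^ (1 / q) = F z * w z := by
    rw [mul_assoc, ← rpow_add_of_nonneg _ _ (one_div_nonneg.2 hpq.nonneg)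
      (one_div_nonneg.2 hpq.symm.nonneg), one_div, one_div,
      hpq.inv_add_inv_eq_one, rpow_one]
  have holder := lintegral_mul_le_Lp_mul_Lq μ hpq (hF.mul (hw.pow_const (1 / p)))
    (hw.pow_const (1 / q))
  simp only [Pi.mul_apply, hsplit, mul_rpow_of_nonneg _ _ hpq.nonneg, ← rpow_mul,
    one_div_mul_cancel hpq.ne_zero, one_div_mul_cancel hpq.symm.ne_zero, rpow_one] at holder
  calc (∫⁻ z, F z * w z ∂μ) ^ p
      ≤ ((∫⁻ z, F z ^ p * w z ∂μ) ^ (1 / p) * (∫⁻ z, w z ∂μ) ^ (1 / q)) ^ p := by gcongr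
    _ = (∫⁻ z, w z ∂μ) ^ (p - 1) * ∫⁻ z, F z ^ p * w z ∂μ := by
      rw [mul_rpow_of_nonneg _ _ hpq.nonneg, ← rpow_mul, ← rpow_mul, one_div_mul_cancel hpq.ne_zero,
        rpow_one, one_div_mul_eq_div, hpq.div_conj_eq_sub_one, mul_comm]

section LConvolution

variable {G : Type*} [MeasurableSpace G] [AddGroup G] [MeasurableAdd₂ G] [MeasurableNeg G]
  {μ : Measure G} [SFinite μ] {p : ℝ} {w F : G → ℝ≥0∞}

theorem setLIntegral_rpow_lconvolution_le (hp : 1 ≤ p) (hw : AEMeasurable w μ)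
    (hF : Measurable F) (s : Set G) :
    ∫⁻ x in s, (w ⋆ₗ[μ] F) x ^ p ∂μ ≤ (∫⁻ y, w y ∂μ) ^ p * ⨆ y, ∫⁻ x in s, F (-y + x) ^ p ∂μ := by
  set W := ∫⁻ y, w y ∂μ with hW
  have hWp : W ^ (p - 1) * W = W ^ p := by
    conv_rhs =>
      rw [← sub_add_cancel p 1, rpow_add_of_nonneg _ _ (by linarith) zero_le_one, rpow_one]
  have hF' : Measurable fun q : G × G => F (-q.2 + q.1) :=
    hF.comp (measurable_snd.neg.add measurable_fst)
  have hprod :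
      AEMeasurable (fun q : G × G => F (-q.2 + q.1) ^ p * w q.2) ((μ.restrict s).prod μ) :=
    (hF'.pow_const p).aemeasurable.mul
      (hw.comp_quasiMeasurePreserving Measure.quasiMeasurePreserving_snd)
  calc ∫⁻ x in s, (w ⋆ₗ[μ] F) x ^ p ∂μ
      ≤ ∫⁻ x in s, W ^ (p - 1) * ∫⁻ y, F (-y + x) ^ p * w y ∂μ ∂μ := by
        refine lintegral_mono fun x => ?_
        simp only [lconvolution_def, mul_comm (w _)]
        exact ENNReal.rpow_lintegral_mul_le hp
          (hF.comp (measurable_neg.add_const x)).aemeasurable hw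
    _ = W ^ (p - 1) * ∫⁻ y, (∫⁻ x in s, F (-y + x) ^ p ∂μ) * w y ∂μ := by
        rw [lintegral_const_mul'' _ hprod.lintegral_prod_right', lintegral_lintegral_swap hprod]
        congr 1
        exact lintegral_congr fun y => lintegral_mul_const (μ := μ.restrict s) (w y)
          ((hF.comp (measurable_const_add (-y))).pow_const p)
    _ ≤ W ^ (p - 1) * ∫⁻ y, (⨆ y, ∫⁻ x in s, F (-y + x) ^ p ∂μ) * w y ∂μ := by
        gcongr with y
        exact le_iSup (fun y => ∫⁻ x in s, F (-y + x) ^ p ∂μ) y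
    _ = W ^ p * ⨆ y, ∫⁻ x in s, F (-y + x) ^ p ∂μ := by
        rw [lintegral_const_mul'' _ hw, ← hW, ← hWp]
        ring

end LConvolution

section Ball

variable {E : Type*} [SeminormedAddCommGroup E] [MeasurableSpace E] {μ : Measure E}

theorem setLIntegral_ball_comp_neg_add [MeasurableAdd E] [μ.IsAddLeftInvariant]
    (F : E → ℝ≥0∞) (y z : E) (r : ℝ) :
    ∫⁻ x in ball y r, F (-z + x) ∂μ = ∫⁻ x in ball (-z + y) r, F x ∂μ := by
  have := (measurePreserving_add_left μ (-z)).setLIntegral_comp_preimage_emb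
    (measurableEmbedding_addLeft (-z)) F (ball (-z + y) r)
  rwa [preimage_add_left_ball, neg_neg, add_neg_cancel_left] at this

theorem setLIntegral_ball_rpow_lconvolution_le [MeasurableAdd₂ E] [MeasurableNeg E] [SFinite μ]
    [μ.IsAddLeftInvariant] {p : ℝ} (hp : 1 ≤ p) {w F : E → ℝ≥0∞} (hw : AEMeasurable w μ)
    (hF : Measurable F) (y : E) (r : ℝ) :
    ∫⁻ x in ball y r, (w ⋆ₗ[μ] F) x ^ p ∂μ ≤
      (∫⁻ z, w z ∂μ) ^ p * ⨆ z, ∫⁻ x in ball z r, F x ^ p ∂μ := by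
  refine (setLIntegral_rpow_lconvolution_le hp hw hF _).trans (mul_le_mul_right ?_ _)
  exact iSup_le fun z => (setLIntegral_ball_comp_neg_add (fun x => F x ^ p) y z r).trans_le
    (le_iSup (fun z => ∫⁻ x in ball z r, F x ^ p ∂μ) _)

theorem ae_lt_top_of_setLIntegral_ball_ne_top {h : E → ℝ≥0∞} (hh : AEMeasurable h μ) (x₀ : E)
    (hball : ∀ k : ℕ, ∫⁻ x in ball x₀ (k + 1), h x ∂μ ≠ ⊤) : ∀ᵐ x ∂μ, h x < ⊤ := by
  rw [← Measure.restrict_univ (μ := μ), ← iUnion_ball_nat_succ x₀, ae_restrict_iUnion_iff]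
  exact fun k => ae_lt_top' hh.restrict (hball k)

end Ball

section ConvolutionMajorant

variable {G : Type*} [AddCommGroup G] [MeasurableSpace G] {μ : Measure G}

theorem lintegral_enorm_comp_sub_mul (f g : G → ℂ) (x : G) :
    ∫⁻ z, ‖f (x - z) * g z‖ₑ ∂μ = ((fun z => ‖g z‖ₑ) ⋆ₗ[μ] fun z => ‖f z‖ₑ) x :=
  lintegral_congr fun z => by rw [enorm_mul, mul_comm, neg_add_eq_sub]

theorem enorm_integral_comp_sub_mul_le (f g : G → ℂ) (x : G) :
    ‖∫ z, f (x - z) * g z ∂μ‖ₑ ≤ ((fun z => ‖g z‖ₑ) ⋆ₗ[μ] fun z => ‖f z‖ₑ) x :=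
  (enorm_integral_le_lintegral_enorm _).trans_eq (lintegral_enorm_comp_sub_mul f g x)

end ConvolutionMajorant

section Morrey

variable {n : ℕ} {p β : ℝ} {f g : EuclideanSpace ℝ (Fin n) → ℂ}

theorem morreyA_conv_le (hp : 1 ≤ p) (hf : Measurable f) (hg : AEMeasurable g)
    (y : EuclideanSpace ℝ (Fin n)) (r : ℝ) :
    morreyA n p β (fun x => ∫ z, f (x - z) * g z) y r ≤
      (∫⁻ z, ‖g z‖ₑ) ^ p * ⨆ z, morreyA n p β f z r := by
  calc morreyA n p β (fun x => ∫ z, f (x - z) * g z) y r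
      ≤ ENNReal.ofReal (r ^ (-β)) *
          ∫⁻ x in ball y r, ((fun z => ‖g z‖ₑ) ⋆ₗ fun z => ‖f z‖ₑ) x ^ p := by
        unfold morreyA
        gcongr with x
        exact enorm_integral_comp_sub_mul_le f g x
    _ ≤ ENNReal.ofReal (r ^ (-β)) *
          ((∫⁻ z, ‖g z‖ₑ) ^ p * ⨆ z, ∫⁻ x in ball z r, ‖f x‖ₑ ^ p) := by
        gcongr
        exact setLIntegral_ball_rpow_lconvolution_le hp hg.enorm hf.enorm y r
    _ = (∫⁻ z, ‖g z‖ₑ) ^ p * ⨆ z, morreyA n p β f z r := by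
        simp only [morreyA, mul_iSup, enorm_eq_nnnorm, mul_left_comm (ENNReal.ofReal _)]

theorem morreyA_le_morreyNorm_rpow (hp : 0 < p) (f : EuclideanSpace ℝ (Fin n) → ℂ)
    (y : EuclideanSpace ℝ (Fin n)) {r : ℝ} (hr : 0 < r) :
    morreyA n p β f y r ≤ morreyNorm n p β f ^ p := by
  rw [← rpow_inv_le_iff hp, ← one_div]
  exact le_iSup₂_of_le y r (le_iSup (fun _ : 0 < r => morreyA n p β f y r ^ (1 / p)) hr)

theorem setLIntegral_ball_le_morreyNorm (hp : 0 < p) (f : EuclideanSpace ℝ (Fin n) → ℂ)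
    (y : EuclideanSpace ℝ (Fin n)) {r : ℝ} (hr : 0 < r) :
    ∫⁻ x in ball y r, ‖f x‖ₑ ^ p ≤ ENNReal.ofReal (r ^ β) * morreyNorm n p β f ^ p := by
  calc ∫⁻ x in ball y r, ‖f x‖ₑ ^ p = ENNReal.ofReal (r ^ β) * morreyA n p β f y r := by
        rw [morreyA, ← mul_assoc, ← ofReal_mul (by positivity), ← Real.rpow_add hr,
          add_neg_cancel, Real.rpow_zero, ofReal_one, one_mul]
        simp only [enorm_eq_nnnorm]
    _ ≤ ENNReal.ofReal (r ^ β) * morreyNorm n p β f ^ p :=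
        mul_le_mul_right (morreyA_le_morreyNorm_rpow hp f y hr) _

theorem morreyNorm_conv_le (hp : 1 ≤ p) (hf : Measurable f) (hg : AEMeasurable g) :
    morreyNorm n p β (fun x => ∫ z, f (x - z) * g z) ≤ (∫⁻ z, ‖g z‖ₑ) * morreyNorm n p β f := by
  have hp0 : 0 < p := zero_lt_one.trans_le hp
  refine iSup₂_le fun y r => iSup_le fun hr => ?_
  rw [one_div, rpow_inv_le_iff hp0, mul_rpow_of_nonneg _ _ hp0.le]
  exact (morreyA_conv_le hp hf hg y r).trans
    (mul_le_mul_right (iSup_le fun z => morreyA_le_morreyNorm_rpow hp0 f z hr) _)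

theorem vanishAtInfinity_conv (hp : 1 ≤ p) (hf : Measurable f) (hg : AEMeasurable g)
    (hG : ∫⁻ z, ‖g z‖ₑ ≠ ⊤) (hfi : vanishAtInfinity n p β f) :
    vanishAtInfinity n p β (fun x => ∫ z, f (x - z) * g z) := by
  have hlim :=
    ENNReal.Tendsto.const_mul hfi (.inr (rpow_ne_top_of_nonneg (zero_le_one.trans hp) hG))
  rw [mul_zero] at hlim
  refine tendsto_of_tendsto_of_tendsto_of_le_of_le tendsto_const_nhds hlim (fun _ => zero_le)
    fun t => iSup₂_le fun y r => iSup_le fun htr => (morreyA_conv_le hp hf hg y r).trans ?_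
  exact mul_le_mul_right (iSup_le fun z =>
    le_iSup₂_of_le z r (le_iSup (fun _ : t ≤ r => morreyA n p β f z r) htr)) _

theorem ae_integrable_conv (hp : 1 ≤ p) (hf : Measurable f) (hg : Integrable g)
    (hfM : morreyNorm n p β f ≠ ⊤) :
    ∀ᵐ x, Integrable (fun z => f (x - z) * g z) := by
  have hp0 : 0 < p := zero_lt_one.trans_le hp
  set h := (fun z => ‖g z‖ₑ) ⋆ₗ fun z => ‖f z‖ₑ
  have hball (k : ℕ) : ∫⁻ x in ball 0 (k + 1), h x ^ p ≠ ⊤ := by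
    have hr : (0 : ℝ) < k + 1 := by positivity
    refine ne_top_of_le_ne_top ?_
      (setLIntegral_ball_rpow_lconvolution_le hp hg.1.aemeasurable.enorm hf.enorm 0 _)
    refine mul_ne_top (rpow_ne_top_of_nonneg hp0.le hg.2.ne) (ne_top_of_le_ne_top ?_
      (iSup_le fun z => setLIntegral_ball_le_morreyNorm (β := β) hp0 f z hr))
    exact mul_ne_top ofReal_ne_top (rpow_ne_top_of_nonneg hp0.le hfM)
  have hh : AEMeasurable (fun x => h x ^ p) :=
    (aemeasurable_lconvolution hg.1.aemeasurable.enorm hf.enorm.aemeasurable).pow_const p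
  filter_upwards [ae_lt_top_of_setLIntegral_ball_ne_top hh 0 hball] with x hx
  refine ⟨(hf.comp (measurable_const.sub measurable_id)).aestronglyMeasurable.mul hg.1, ?_⟩
  rw [hasFiniteIntegral_def, lintegral_enorm_comp_sub_mul]
  exact (rpow_lt_top_iff_of_pos hp0).mp hx

end Morrey

theorem vanishAtInfinity_convolution_invariant_general (n : ℕ) (p β : ℝ)
    (hp : 1 ≤ p)
    (f g : EuclideanSpace ℝ (Fin n) → ℂ) (hf : Measurable f)
    (hfM : morreyNorm n p β f < ⊤) (hfi : vanishAtInfinity n p β f)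
    (hg : Integrable g) :
    (∀ᵐ x : EuclideanSpace ℝ (Fin n), Integrable (fun z => f (x - z) * g z)) ∧
    morreyNorm n p β (fun x => ∫ z, f (x - z) * g z) < ⊤ ∧
    vanishAtInfinity n p β (fun x => ∫ z, f (x - z) * g z) :=
  ⟨ae_integrable_conv hp hf hg hfM.ne,
    (morreyNorm_conv_le hp hf hg.1.aemeasurable).trans_lt (mul_lt_top hg.2 hfM),
    vanishAtInfinity_conv hp hf hg.1.aemeasurable hg.2.ne hfi⟩

/-- `L^{p,β}_∞` is invariant under convolution with integrable functions: if `f ∈ L^{p,β}_∞`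
and `g ∈ L¹`, then `f ∗ g` is defined a.e. and belongs to `L^{p,β}_∞`. -/
theorem vanishAtInfinity_convolution_invariant (n : ℕ) (hn : 1 ≤ n) (p β : ℝ)
    (hp : 1 ≤ p) (hβ : 0 ≤ β) (hβn : β < n)
    (f g : EuclideanSpace ℝ (Fin n) → ℂ) (hf : Measurable f)
    (hfM : morreyNorm n p β f < ⊤) (hfi : vanishAtInfinity n p β f)
    (hg : Integrable g) :
    (∀ᵐ x : EuclideanSpace ℝ (Fin n), Integrable (fun z => f (x - z) * g z)) ∧
    morreyNorm n p β (fun x => ∫ z, f (x - z) * g z) < ⊤ ∧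
    vanishAtInfinity n p β (fun x => ∫ z, f (x - z) * g z) :=
  vanishAtInfinity_convolution_invariant_general n p β hp f g hf hfM hfi hg
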